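/- Let B be the standard Brownian bridge on [0,1] and χ(t) = B(t)/√(t(1−t)), t ∈ (0,1), the normalized standard Brownian bridge, whose correlation for s < t equals E[χ(s)χ(t)] = √( (s(1−t)) / (t(1−s)) ). Then for every t_0 ∈ (0,1), as s,t → t_0 with s ≠ t, (1 − E[χ(s)χ(t)]) / |t−s| → 1/(2 t_0 (1−t_0)); i.e. χ is locally stationary with K²(h) = h, α = 1 and C(t) = 1/(2t(1−t)). -/

import Mathlib

open MeasureTheory ProbabilityTheory Filter Set Real

noncomputable section

/-- `X` is a centered Gaussian process on the index set `T` under the probability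
measure `P`: every finite linear combination of its values is a centered Gaussian
random variable. -/
def IsCenteredGaussianProcess {Ω : Type} [MeasurableSpace Ω] (P : Measure Ω)
    (T : Set ℝ) (X : ℝ → Ω → ℝ) : Prop :=
  (∀ t ∈ T, Measurable (X t)) ∧
  ∀ (m : ℕ) (ts : Fin m → ℝ) (c : Fin m → ℝ), (∀ i, ts i ∈ T) →
    ∃ v : NNReal,
      Measure.map (fun ω => ∑ i, c i * X (ts i) ω) P = gaussianReal 0 v

/-- a family of processes is (mutually) independent if the generated path-valued random
variables are independent. -/
def IndepProcesses {Ω : Type} [MeasurableSpace Ω] (P : Measure Ω) {ι : Type}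
    (X : ι → ℝ → Ω → ℝ) : Prop :=
  iIndepFun (fun i ω => fun t => X i t ω) P

/-- `K` is regularly varying at `0⁺` with index `ρ`. -/
def RegularVaryingAtZero (K : ℝ → ℝ) (ρ : ℝ) : Prop :=
  ∀ l : ℝ, 0 < l →
    Tendsto (fun t => K (l * t) / K t) (nhdsWithin 0 (Ioi 0)) (nhds (l ^ ρ))

/-- the generalized inverse of a function `K` defined near `0⁺`. -/
def genInv (K : ℝ → ℝ) (y : ℝ) : ℝ := sInf {t : ℝ | 0 < t ∧ y ≤ K t}

/-- `B` is a standard Brownian bridge on `[0,1]` with a.s. continuous sample paths. -/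
def IsStdBrownianBridge {Ω : Type} [MeasurableSpace Ω] (P : Measure Ω)
    (B : ℝ → Ω → ℝ) : Prop :=
  IsCenteredGaussianProcess P (Icc 0 1) B ∧
  (∀ᵐ ω ∂P, ContinuousOn (fun t => B t ω) (Icc 0 1)) ∧
  ∀ s ∈ Icc (0:ℝ) 1, ∀ t ∈ Icc (0:ℝ) 1, ∫ ω, B s ω * B t ω ∂P = min s t - s * t

/-- the correlation function of the normalized Brownian bridge: for `s < t`,
`r(s,t) = √(s(1−t)/(t(1−s)))`, written symmetrically. -/
def bridgeCorr (s t : ℝ) : ℝ :=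
  Real.sqrt ((min s t * (1 - max s t)) / (max s t * (1 - min s t)))

lemma bridgeCorr_comm (s t : ℝ) : bridgeCorr s t = bridgeCorr t s := by
  unfold bridgeCorr; rw [min_comm, max_comm]

lemma corr_eq_of_le {s t : ℝ} (hs : s ∈ Ioo (0:ℝ) 1) (ht : t ∈ Ioo (0:ℝ) 1)
    (hst : s ≤ t) :
    (min s t - s * t) / (Real.sqrt (s * (1 - s)) * Real.sqrt (t * (1 - t))) =
      bridgeCorr s t := by
  obtain ⟨hs0, hs1⟩ := hs
  obtain ⟨ht0, ht1⟩ := ht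
  have ha : 0 < s * (1 - t) := by nlinarith
  have hb : 0 < t * (1 - s) := by nlinarith
  have hsq : Real.sqrt (s * (1 - t)) * Real.sqrt (s * (1 - t)) = s * (1 - t) :=
    Real.mul_self_sqrt ha.le
  have hden : Real.sqrt (s * (1 - s)) * Real.sqrt (t * (1 - t))
      = Real.sqrt (s * (1 - t)) * Real.sqrt (t * (1 - s)) := by
    rw [← Real.sqrt_mul (by nlinarith), ← Real.sqrt_mul ha.le,
      show s * (1 - s) * (t * (1 - t)) = s * (1 - t) * (t * (1 - s)) by ring]
  rw [min_eq_left hst, hden]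
  unfold bridgeCorr
  rw [min_eq_left hst, max_eq_right hst, Real.sqrt_div ha.le]
  rw [show s - s * t = Real.sqrt (s * (1 - t)) * Real.sqrt (s * (1 - t)) by rw [hsq]; ring]
  rw [mul_div_mul_left _ _ (Real.sqrt_pos.mpr ha).ne']

lemma bridgeCorr_key {s t : ℝ} (hs : s ∈ Ioo (0:ℝ) 1) (ht : t ∈ Ioo (0:ℝ) 1) (hne : s ≠ t) :
    (1 - bridgeCorr s t) / |t - s| =
      1 / (max s t * (1 - min s t) * (1 + bridgeCorr s t)) := by
  have hm0 : 0 < min s t := lt_min hs.1 ht.1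
  have hM1 : max s t < 1 := max_lt hs.2 ht.2
  have hmM : min s t < max s t := min_lt_max.mpr hne
  have hM0 : 0 < max s t := hm0.trans hmM
  have habs : |t - s| = max s t - min s t := by
    exact (max_sub_min_eq_abs s t).symm
  have hden : 0 < max s t * (1 - min s t) := by nlinarith
  have hr0 : 0 ≤ bridgeCorr s t := Real.sqrt_nonneg _
  have hr2 : bridgeCorr s t ^ 2 * (max s t * (1 - min s t)) = min s t * (1 - max s t) := by
    unfold bridgeCorr
    rw [Real.sq_sqrt (div_nonneg (by nlinarith) hden.le)]
    exact div_mul_cancel₀ _ hden.ne'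
  rw [habs, div_eq_div_iff (by linarith) (by positivity)]
  linear_combination -hr2

/-- **Local stationarity of the normalized Brownian bridge** `χ(t) = B(t)/√(t(1−t))`:
its correlation is `E[χ(s)χ(t)] = √(s(1−t)/(t(1−s)))` for `s < t`, and for every
`t₀ ∈ (0,1)`, `(1 − E[χ(s)χ(t)])/|t−s| → 1/(2t₀(1−t₀))` as `s,t → t₀`, `s ≠ t`;
i.e. `χ` is locally stationary with `K²(h) = h`, `α = 1` and `C(t) = 1/(2t(1−t))`. -/
theorem normalized_brownian_bridge_locally_stationary
    (Ω : Type) (_ : MeasurableSpace Ω) (P : Measure Ω) (_ : IsProbabilityMeasure P)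
    (B : ℝ → Ω → ℝ) (hB : IsStdBrownianBridge P B) :
    (∀ s ∈ Ioo (0:ℝ) 1, ∀ t ∈ Ioo (0:ℝ) 1,
      ∫ ω, (B s ω / Real.sqrt (s * (1 - s))) * (B t ω / Real.sqrt (t * (1 - t))) ∂P =
        bridgeCorr s t) ∧
    ∀ t0 ∈ Ioo (0:ℝ) 1,
      Tendsto (fun p : ℝ × ℝ => (1 - bridgeCorr p.1 p.2) / |p.2 - p.1|)
        (nhdsWithin (t0, t0) {p : ℝ × ℝ | p.1 ≠ p.2 ∧ p.1 ∈ Ioo (0:ℝ) 1 ∧ p.2 ∈ Ioo (0:ℝ) 1})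
        (nhds (1 / (2 * t0 * (1 - t0)))) := by
  constructor
  · intro s hs t ht
    simp only [div_mul_div_comm]
    rw [integral_div,
      hB.2.2 s (Ioo_subset_Icc_self hs) t (Ioo_subset_Icc_self ht)]
    rcases le_total s t with h | h
    · exact corr_eq_of_le hs ht h
    · rw [bridgeCorr_comm, min_comm, mul_comm s t,
        mul_comm (Real.sqrt (s * (1 - s))) (Real.sqrt (t * (1 - t)))]
      exact corr_eq_of_le ht hs h
  · intro t0 ht0
    obtain ⟨h0, h1⟩ := ht0
    have hpos : (0:ℝ) < t0 * (1 - t0) := by nlinarith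
    have hC : bridgeCorr t0 t0 = 1 := by
      unfold bridgeCorr
      rw [min_self, max_self, div_self hpos.ne', Real.sqrt_one]
    have hmin : ContinuousAt (fun p : ℝ × ℝ => min p.1 p.2) (t0, t0) :=
      (continuous_fst.min continuous_snd).continuousAt
    have hmax : ContinuousAt (fun p : ℝ × ℝ => max p.1 p.2) (t0, t0) :=
      (continuous_fst.max continuous_snd).continuousAt
    have hcont : ContinuousAt (fun p : ℝ × ℝ => bridgeCorr p.1 p.2) (t0, t0) := by
      simp only [bridgeCorr]
      apply ContinuousAt.sqrt
      apply ContinuousAt.div (hmin.mul (continuousAt_const.sub hmax))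
        (hmax.mul (continuousAt_const.sub hmin))
      simp only [Pi.mul_apply, Pi.sub_apply, min_self, max_self]
      exact hpos.ne'
    have hGc : ContinuousAt (fun p : ℝ × ℝ =>
        1 / (max p.1 p.2 * (1 - min p.1 p.2) * (1 + bridgeCorr p.1 p.2))) (t0, t0) := by
      apply ContinuousAt.div continuousAt_const
        ((hmax.mul (continuousAt_const.sub hmin)).mul (continuousAt_const.add hcont))
      simp only [Pi.mul_apply, Pi.sub_apply, Pi.add_apply, min_self, max_self, hC]
      nlinarith
    have hval : (1 : ℝ) / (max t0 t0 * (1 - min t0 t0) * (1 + bridgeCorr t0 t0))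
        = 1 / (2 * t0 * (1 - t0)) := by
      rw [min_self, max_self, hC]; ring_nf
    have htend : Tendsto (fun p : ℝ × ℝ =>
        1 / (max p.1 p.2 * (1 - min p.1 p.2) * (1 + bridgeCorr p.1 p.2)))
        (nhdsWithin (t0, t0) {p : ℝ × ℝ | p.1 ≠ p.2 ∧ p.1 ∈ Ioo (0:ℝ) 1 ∧ p.2 ∈ Ioo (0:ℝ) 1})
        (nhds (1 / (2 * t0 * (1 - t0)))) := by
      rw [← hval]
      exact hGc.tendsto.mono_left nhdsWithin_le_nhds
    refine htend.congr' ?_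
    filter_upwards [self_mem_nhdsWithin] with p hp
    exact (bridgeCorr_key hp.2.1 hp.2.2 hp.1).symm
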